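/- arXiv:1808.04783 — 5 statements merged into one kernel-verified Lean document; each statement's English description precedes it below -/
import Mathlib

section
/- Let Q ∈ ℤ[x] be a monic polynomial of degree t that is irreducible over ℚ, let e ≥ 1, and set n = t·e. Then there exists a positive integer N such that for every prime l > N, every n×n matrix A over the l-adic integers ℤ_l whose characteristic polynomial is Q^e and which satisfies Q(A) = 0 is conjugate by an element of GL_n(ℤ_l) to the block-diagonal matrix consisting of e copies of the companion matrix of Q. -/
/-!
Reduce modulo `l`. Since `Q` is separable over `ℚ`, the resultant `r` of `Q` and `Q'` is a nonzero
integer, and for `l > |r|` it stays a unit in `𝔽_l`, so `Q mod l` is still separable, hence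
squarefree. Over a field `k`, an endomorphism `f` with `q(f) = 0` for a squarefree `q` and
characteristic polynomial `q ^ e` is generated, as a `k[X]`-module, by `e` vectors: splitting off
an irreducible factor `q₁` of `q` decomposes the space into `ker q₁(f) ⊕ ker q₂(f)`, the first is a
vector space of dimension `e` over `k[X]/(q₁)`, and generators of the two pieces add up to
generators of the whole (Chinese remainder theorem). Lifting such generators `v_m` of `A mod l`
to `ℤ_l`, the vectors `A^i v_m` (`i < deg Q`) form a basis of `ℤ_l^n` (it is one modulo `l`), and in
this basis `A` acts by `e` companion blocks because `Q(A) = 0`.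
-/

/-- The companion matrix of a monic polynomial `Q` of degree `t`: ones on the
subdiagonal and the negated coefficients of `Q` in the last column, so that its
characteristic polynomial is `Q`. -/
def companionMatrix {R : Type*} [CommRing R] (t : ℕ) (Q : Polynomial R) :
    Matrix (Fin t) (Fin t) R := fun i j =>
  if (j : ℕ) = t - 1 then -Q.coeff (i : ℕ)
  else if (i : ℕ) = (j : ℕ) + 1 then 1 else 0

open Polynomial

theorem Polynomial.separable_map_of_isUnit_resultant_derivative {R S : Type*} [CommRing R]
    [CommRing S] (φ : R →+* S) {f : R[X]} (hf : f.natDegree ≠ 0)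
    (h : IsUnit (φ (f.resultant (derivative f) f.natDegree (f.natDegree - 1)))) :
    (f.map φ).Separable := by
  obtain ⟨p, q, -, -, hpq⟩ := exists_mul_add_mul_eq_C_resultant (m := f.natDegree)
    (n := f.natDegree - 1) (f.map φ) (derivative (f.map φ)) natDegree_map_le
    ((natDegree_derivative_le _).trans (Nat.sub_le_sub_right natDegree_map_le 1)) (Or.inl hf)
  rw [derivative_map, resultant_map_map, ← derivative_map] at hpq
  refine ⟨C (↑h.unit⁻¹ : S) * p, C (↑h.unit⁻¹ : S) * q, ?_⟩
  rw [mul_comm _ (f.map φ), mul_comm _ (derivative _), mul_left_comm, mul_left_comm (derivative _),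
    ← mul_add, hpq, ← C_mul, IsUnit.val_inv_mul, C_1]

theorem Polynomial.resultant_derivative_ne_zero {K : Type*} [Field K] [CharZero K] {f : K[X]}
    (hf : f.Separable) : f.resultant (derivative f) f.natDegree (f.natDegree - 1) ≠ 0 := by
  rw [← natDegree_derivative]
  exact resultant_ne_zero f _ hf

theorem Polynomial.exists_separable_map_zmod_of_separable_map_rat {Q : ℤ[X]}
    (hQ : Q.natDegree ≠ 0) (hsep : (Q.map (Int.castRingHom ℚ)).Separable) :
    ∃ N : ℕ, 0 < N ∧ ∀ l : ℕ, l.Prime → N < l → (Q.map (Int.castRingHom (ZMod l))).Separable := by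
  set r := Q.resultant (derivative Q) Q.natDegree (Q.natDegree - 1)
  have hr : r ≠ 0 := by
    have := resultant_derivative_ne_zero hsep
    rwa [natDegree_map_eq_of_injective (RingHom.injective_int _), derivative_map,
      resultant_map_map, map_ne_zero_iff _ (RingHom.injective_int _)] at this
  refine ⟨r.natAbs, Int.natAbs_pos.mpr hr, fun l hl hlr => ?_⟩
  have := Fact.mk hl
  refine separable_map_of_isUnit_resultant_derivative _ hQ (isUnit_iff_ne_zero.mpr ?_)
  rw [eq_intCast, Ne, ZMod.intCast_zmod_eq_zero_iff_dvd]
  exact fun hdvd => hlr.not_ge (Nat.le_of_dvd (Int.natAbs_pos.mpr hr) (Int.natCast_dvd.mp hdvd))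

theorem Polynomial.Monic.eq_of_mul_eq_mul_of_isCoprime {R : Type*} [CommRing R] [IsDomain R]
    {c₁ c₂ a b : R[X]} (hc₁ : c₁.Monic) (ha : a.Monic) (h : c₁ * c₂ = a * b)
    (h₁ : IsCoprime c₁ b) (h₂ : IsCoprime a c₂) : c₁ = a ∧ c₂ = b := by
  obtain rfl : c₁ = a := eq_of_monic_of_associated hc₁ ha <| associated_of_dvd_dvd
    (h₁.dvd_of_dvd_mul_right ⟨c₂, h.symm⟩) (h₂.dvd_of_dvd_mul_right ⟨b, h⟩)
  exact ⟨rfl, mul_left_cancel₀ ha.ne_zero h⟩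

namespace Module.End

section CommRing

variable {R M ι : Type*} [CommRing R] [AddCommGroup M] [Module R M]

def cyclicSpan (f : Module.End R M) (v : ι → M) : Submodule R M :=
  Submodule.span R (Set.range fun x : R[X] × ι => aeval f x.1 (v x.2))

variable {f : Module.End R M} {v w : ι → M}

theorem mem_cyclicSpan (p : R[X]) (i : ι) : aeval f p (v i) ∈ cyclicSpan f v :=
  Submodule.subset_span ⟨(p, i), rfl⟩

theorem aeval_apply_mem_cyclicSpan {x : M} (hx : x ∈ cyclicSpan f v) (p : R[X]) :
    aeval f p x ∈ cyclicSpan f v := by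
  have : cyclicSpan f v ≤ (cyclicSpan f v).comap (aeval f p) := Submodule.span_le.mpr <| by
    rintro _ ⟨⟨r, i⟩, rfl⟩
    simpa [← Module.End.mul_apply, ← map_mul] using mem_cyclicSpan (f := f) (v := v) (p * r) i
  exact this hx

theorem cyclicSpan_le (h : ∀ i, w i ∈ cyclicSpan f v) : cyclicSpan f w ≤ cyclicSpan f v :=
  Submodule.span_le.mpr <| by
    rintro _ ⟨⟨p, i⟩, rfl⟩
    exact aeval_apply_mem_cyclicSpan (h i) p

theorem cyclicSpan_le_span_pow {q : R[X]} (hq : q.Monic) (h0 : aeval f q = 0) :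
    cyclicSpan f v ≤
      Submodule.span R (Set.range fun x : Fin q.natDegree × ι => (f ^ (x.1 : ℕ)) (v x.2)) := by
  nontriviality R
  refine Submodule.span_le.mpr ?_
  rintro _ ⟨⟨p, i⟩, rfl⟩
  simp only [SetLike.mem_coe]
  rw [← aeval_modByMonic_eq_self_of_root h0, aeval_endomorphism,
    ← sum_fin (fun n b => b • (f ^ n) (v i)) (fun _ => zero_smul _ _)
      ((degree_modByMonic_lt p hq).trans_le degree_le_natDegree)]
  exact Submodule.sum_mem _ fun j _ => Submodule.smul_mem _ _ (Submodule.subset_span ⟨(j, i), rfl⟩)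

theorem cyclicSpan_sup_le_cyclicSpan_add {q₁ q₂ : R[X]} (hq : IsCoprime q₁ q₂) {v₁ v₂ : ι → M}
    (h₁ : ∀ i, aeval f q₁ (v₁ i) = 0) (h₂ : ∀ i, aeval f q₂ (v₂ i) = 0) :
    cyclicSpan f v₁ ⊔ cyclicSpan f v₂ ≤ cyclicSpan f (v₁ + v₂) := by
  obtain ⟨a, b, hab⟩ := hq
  have hv₁ : ∀ i, aeval f (b * q₂) ((v₁ + v₂) i) = v₁ i := fun i => by
    have := congr(aeval f $hab (v₁ i))
    simp only [map_add, map_mul, map_one, LinearMap.add_apply, Module.End.mul_apply, h₁, map_zero,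
      zero_add, Module.End.one_apply] at this
    simpa [Module.End.mul_apply, h₂] using this
  have hv₂ : ∀ i, aeval f (a * q₁) ((v₁ + v₂) i) = v₂ i := fun i => by
    have := congr(aeval f $hab (v₂ i))
    simp only [map_add, map_mul, map_one, LinearMap.add_apply, Module.End.mul_apply, h₂, map_zero,
      add_zero, Module.End.one_apply] at this
    simpa [Module.End.mul_apply, h₁] using this
  refine sup_le (cyclicSpan_le fun i => ?_) (cyclicSpan_le fun i => ?_)
  · exact hv₁ i ▸ mem_cyclicSpan _ i
  · exact hv₂ i ▸ mem_cyclicSpan _ i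

theorem coe_aeval_restrict_apply {p : Submodule R M} (h : ∀ x ∈ p, f x ∈ p) (r : R[X]) (x : p) :
    (aeval (f.restrict h) r x : M) = aeval f r x := by
  induction r using Polynomial.induction_on' with
  | add r s hr hs => simp [hr, hs]
  | monomial n a =>
    simp [aeval_monomial, Algebra.algebraMap_eq_smul_one, Module.End.pow_restrict n h]

theorem map_cyclicSpan_restrict {p : Submodule R M} (h : ∀ x ∈ p, f x ∈ p) (v : ι → p) :
    (cyclicSpan (f.restrict h) v).map p.subtype = cyclicSpan f (fun i => (v i : M)) := by
  simp only [cyclicSpan, Submodule.map_span, ← Set.range_comp]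
  congr! with x
  exact coe_aeval_restrict_apply h _ _

theorem mapsTo_ker_aeval (f : Module.End R M) (p : R[X]) :
    ∀ x ∈ LinearMap.ker (aeval f p), f x ∈ LinearMap.ker (aeval f p) := fun x hx => by
  have := congr((aeval f $(mul_comm p X)) x)
  simp only [map_mul, aeval_X, Module.End.mul_apply] at this
  rw [LinearMap.mem_ker] at hx ⊢
  rw [this, hx, map_zero]

theorem aeval_restrict_ker_aeval (f : Module.End R M) (p : R[X]) :
    aeval (f.restrict (mapsTo_ker_aeval f p)) p = 0 :=
  LinearMap.ext fun x => Subtype.ext <| (coe_aeval_restrict_apply _ p x).trans x.2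

theorem isCompl_ker_aeval_of_isCoprime (f : Module.End R M) {q₁ q₂ : R[X]} (hq : IsCoprime q₁ q₂)
    (h0 : aeval f (q₁ * q₂) = 0) :
    IsCompl (LinearMap.ker (aeval f q₁)) (LinearMap.ker (aeval f q₂)) :=
  ⟨disjoint_ker_aeval_of_isCoprime f hq, codisjoint_iff.mpr <| by
    rw [sup_ker_aeval_eq_ker_aeval_mul_of_coprime f hq, h0, LinearMap.ker_zero]⟩

theorem exists_cyclicSpan_eq_top_of_isCoprime {q₁ q₂ : R[X]} (hq : IsCoprime q₁ q₂)
    (h0 : aeval f (q₁ * q₂) = 0) {v₁ : ι → LinearMap.ker (aeval f q₁)}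
    {v₂ : ι → LinearMap.ker (aeval f q₂)}
    (h₁ : cyclicSpan (f.restrict (mapsTo_ker_aeval f q₁)) v₁ = ⊤)
    (h₂ : cyclicSpan (f.restrict (mapsTo_ker_aeval f q₂)) v₂ = ⊤) :
    ∃ v : ι → M, cyclicSpan f v = ⊤ := by
  refine ⟨fun i => v₁ i + v₂ i, eq_top_iff.mpr ?_⟩
  have := cyclicSpan_sup_le_cyclicSpan_add hq (f := f) (v₁ := fun i => v₁ i)
    (v₂ := fun i => v₂ i) (fun i => (v₁ i).2) (fun i => (v₂ i).2)
  rwa [← map_cyclicSpan_restrict (mapsTo_ker_aeval f q₁), h₁,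
    ← map_cyclicSpan_restrict (mapsTo_ker_aeval f q₂), h₂, Submodule.map_subtype_top,
    Submodule.map_subtype_top, (isCompl_ker_aeval_of_isCoprime f hq h0).sup_eq_top] at this

end CommRing

end Module.End

theorem Matrix.dvd_of_irreducible_dvd_charpoly {k n : Type*} [Field k] [Fintype n] [DecidableEq n]
    {A : Matrix n n k} {p r : k[X]} (hp : Irreducible p) (hpA : p ∣ A.charpoly)
    (hr : aeval A r = 0) : p ∣ r := by
  have := Fact.mk hp
  -- the root of `p` in `k[X]/(p)` is an eigenvalue of `A`, so it is a root of `r`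
  have hroot : Module.End.HasEigenvalue (toLin' ((Algebra.ofId k (AdjoinRoot p)).mapMatrix A))
      (AdjoinRoot.root p) := by
    rw [Module.End.hasEigenvalue_iff_isRoot_charpoly, Matrix.charpoly_toLin']
    change (A.map (algebraMap k _)).charpoly.IsRoot _
    rwa [Matrix.charpoly_map, IsRoot, eval_map_algebraMap, AdjoinRoot.aeval_eq,
      AdjoinRoot.mk_eq_zero]
  obtain ⟨x, hx⟩ := hroot.exists_hasEigenvector
  have hrB : aeval (toLin' ((Algebra.ofId k (AdjoinRoot p)).mapMatrix A))
      (r.map (algebraMap k (AdjoinRoot p))) = 0 := by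
    rw [show toLin' ((Algebra.ofId k (AdjoinRoot p)).mapMatrix A) =
        Matrix.toLinAlgEquiv' ((Algebra.ofId k (AdjoinRoot p)).mapMatrix A) from rfl,
      aeval_algEquiv, AlgHom.comp_apply, aeval_map_algebraMap, aeval_algHom_apply, hr, map_zero,
      map_zero]
  have := Module.End.aeval_apply_of_hasEigenvector (p := r.map (algebraMap k _)) hx
  rwa [hrB, LinearMap.zero_apply, eq_comm, smul_eq_zero_iff_left hx.2, eval_map_algebraMap,
    AdjoinRoot.aeval_eq, AdjoinRoot.mk_eq_zero] at this

namespace Module.End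

section Field

variable {k M : Type*} [Field k] [AddCommGroup M] [Module k M] [FiniteDimensional k M]

theorem dvd_of_irreducible_dvd_charpoly {f : Module.End k M} {p r : k[X]} (hp : Irreducible p)
    (hpf : p ∣ f.charpoly) (hr : aeval f r = 0) : p ∣ r := by
  let b := Module.finBasis k M
  refine Matrix.dvd_of_irreducible_dvd_charpoly (A := LinearMap.toMatrixAlgEquiv b f) hp ?_ ?_
  · exact (LinearMap.charpoly_toMatrix f b).symm ▸ hpf
  · rw [aeval_algEquiv, AlgHom.comp_apply, hr, map_zero]

theorem charpoly_eq_pow_of_aeval_eq_zero {f : Module.End k M} {q : k[X]} (hq : Irreducible q)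
    (hqm : q.Monic) (h0 : aeval f q = 0) : ∃ a, f.charpoly = q ^ a := by
  classical
  have hfactor : ∀ {m}, m ∈ UniqueFactorizationMonoid.normalizedFactors f.charpoly → m = q := by
    intro m hm
    obtain ⟨hmi, hmm, hmf⟩ := (Polynomial.mem_normalizedFactors_iff f.charpoly_monic.ne_zero).mp hm
    exact eq_of_monic_of_associated hmm hqm
      (hmi.associated_of_dvd hq (dvd_of_irreducible_dvd_charpoly hmi hmf h0))
  obtain ⟨a, ha⟩ :=
    UniqueFactorizationMonoid.exists_associated_prime_pow_of_unique_normalized_factor hfactor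
      f.charpoly_monic.ne_zero
  exact ⟨a, (eq_of_monic_of_associated (hqm.pow a) f.charpoly_monic ha).symm⟩

theorem charpoly_eq_mul_of_isCompl {f : Module.End k M} {p₁ p₂ : Submodule k M}
    (hp : IsCompl p₁ p₂) (h₁ : ∀ x ∈ p₁, f x ∈ p₁) (h₂ : ∀ x ∈ p₂, f x ∈ p₂) :
    f.charpoly = (f.restrict h₁).charpoly * (f.restrict h₂).charpoly := by
  rw [← LinearMap.charpoly_prodMap, ← LinearEquiv.charpoly_conj (p₁.prodEquivOfIsCompl p₂ hp)]
  congr 1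
  ext x
  obtain ⟨y, rfl⟩ := (p₁.prodEquivOfIsCompl p₂ hp).surjective x
  simp

theorem charpoly_restrict_ker_aeval_eq_pow {f : Module.End k M} {q₁ q₂ : k[X]}
    (hq₁ : Irreducible q₁) (hm₁ : q₁.Monic) (hq : IsCoprime q₁ q₂)
    (h0 : aeval f (q₁ * q₂) = 0) {e : ℕ} (hch : f.charpoly = (q₁ * q₂) ^ e) :
    (f.restrict (mapsTo_ker_aeval f q₁)).charpoly = q₁ ^ e ∧
      (f.restrict (mapsTo_ker_aeval f q₂)).charpoly = q₂ ^ e := by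
  obtain ⟨a, ha⟩ := charpoly_eq_pow_of_aeval_eq_zero hq₁ hm₁ (aeval_restrict_ker_aeval f q₁)
  have hc₂ : IsCoprime (q₁ ^ e) (f.restrict (mapsTo_ker_aeval f q₂)).charpoly := by
    refine IsCoprime.pow_left (hq₁.coprime_iff_not_dvd.mpr fun hdvd => hq₁.not_isUnit ?_)
    exact hq.isUnit_of_dvd' dvd_rfl
      (dvd_of_irreducible_dvd_charpoly hq₁ hdvd (aeval_restrict_ker_aeval f q₂))
  refine (LinearMap.charpoly_monic _).eq_of_mul_eq_mul_of_isCoprime (hm₁.pow e) ?_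
    (ha ▸ hq.pow) hc₂
  rw [← charpoly_eq_mul_of_isCompl (isCompl_ker_aeval_of_isCoprime f hq h0), hch, mul_pow]

theorem exists_cyclicSpan_eq_top_of_irreducible {f : Module.End k M} {q : k[X]}
    (hq : Irreducible q) (h0 : aeval f q = 0) {e : ℕ} (hch : f.charpoly = q ^ e) :
    ∃ v : Fin e → M, cyclicSpan f v = ⊤ := by
  have := Fact.mk hq
  -- `M` is a vector space over the field `k[X]/(q)`, of dimension `e` by counting `k`-dimensions
  let φ : AdjoinRoot q →+* Module.End k M :=
    Ideal.Quotient.lift _ (aeval f).toRingHom fun a ha => by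
      obtain ⟨c, rfl⟩ := Ideal.mem_span_singleton'.mp ha
      simp [h0]
  have hφ (p : k[X]) : φ (AdjoinRoot.mk q p) = aeval f p := Ideal.Quotient.lift_mk _ _ _
  let := Module.compHom M φ
  have : IsScalarTower k (AdjoinRoot q) M := ⟨fun a c x => by
    change φ (a • c) x = a • φ c x
    rw [Algebra.smul_def, map_mul, AdjoinRoot.algebraMap_eq, AdjoinRoot.of, RingHom.comp_apply, hφ,
      aeval_C, Module.End.mul_apply, Module.algebraMap_end_apply]⟩
  have : Module.Finite (AdjoinRoot q) M := Module.Finite.of_restrictScalars_finite k _ M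
  have hrank : Module.finrank (AdjoinRoot q) M = e := by
    have := Module.finrank_mul_finrank k (AdjoinRoot q) M
    rw [(AdjoinRoot.powerBasis hq.ne_zero).finrank, AdjoinRoot.powerBasis_dim,
      ← LinearMap.charpoly_natDegree f, hch, natDegree_pow, mul_comm e] at this
    exact Nat.eq_of_mul_eq_mul_left hq.natDegree_pos this
  let b := Module.finBasisOfFinrankEq (AdjoinRoot q) M hrank
  refine ⟨b, eq_top_iff.mpr fun x _ => ?_⟩
  rw [← b.sum_repr x]
  refine Submodule.sum_mem _ fun i _ => ?_
  obtain ⟨p, hp⟩ := AdjoinRoot.mk_surjective (b.repr x i)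
  have : b.repr x i • b i = aeval f p (b i) := by
    rw [← hp]
    exact congr($(hφ p) (b i))
  exact this ▸ mem_cyclicSpan p i

theorem exists_cyclicSpan_eq_top {f : Module.End k M} {q : k[X]} (hqm : q.Monic)
    (hq : Squarefree q) (h0 : aeval f q = 0) {e : ℕ} (hch : f.charpoly = q ^ e) :
    ∃ v : Fin e → M, cyclicSpan f v = ⊤ := by
  induction hd : q.natDegree using Nat.strong_induction_on generalizing q M with
  | _ d ih =>
  rcases eq_or_ne d 0 with rfl | hd0
  · obtain rfl := eq_one_of_monic_natDegree_zero hqm hd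
    have : Subsingleton M := ⟨fun x y => sub_eq_zero.mp (by simpa using congr($h0 (x - y)))⟩
    exact ⟨0, Subsingleton.elim _ _⟩
  obtain ⟨q₁, hm₁, hq₁, q₂, rfl⟩ :=
    exists_monic_irreducible_factor q (not_isUnit_of_natDegree_pos q (by omega))
  have hm₂ : q₂.Monic := hm₁.of_mul_monic_left hqm
  have hcop : IsCoprime q₁ q₂ := hq₁.coprime_iff_not_dvd.mpr fun h =>
    hq₁.not_isUnit (hq q₁ (mul_dvd_mul_left q₁ h))
  obtain ⟨hc₁, hc₂⟩ := charpoly_restrict_ker_aeval_eq_pow hq₁ hm₁ hcop h0 hch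
  obtain ⟨v₁, hv₁⟩ :=
    exists_cyclicSpan_eq_top_of_irreducible hq₁ (aeval_restrict_ker_aeval f q₁) hc₁
  have hlt : q₂.natDegree < d := by
    rw [← hd, natDegree_mul hm₁.ne_zero hm₂.ne_zero]
    exact Nat.lt_add_of_pos_left hq₁.natDegree_pos
  obtain ⟨v₂, hv₂⟩ := ih _ hlt hm₂ hq.of_mul_right (aeval_restrict_ker_aeval f q₂) hc₂ rfl
  exact exists_cyclicSpan_eq_top_of_isCoprime hcop h0 hv₁ hv₂

end Field

end Module.End

namespace Matrix

variable {R n ι : Type*} [CommRing R] [Fintype n] [DecidableEq n]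

def krylov (A : Matrix n n R) (t : ℕ) (v : ι → n → R) : Matrix n (Fin t × ι) R :=
  of fun x p => (A ^ (p.1 : ℕ) *ᵥ v p.2) x

theorem pow_natDegree_mulVec {A : Matrix n n R} {q : R[X]} (hq : q.Monic) (h0 : aeval A q = 0)
    (w : n → R) :
    A ^ q.natDegree *ᵥ w = -∑ i ∈ Finset.range q.natDegree, q.coeff i • (A ^ i *ᵥ w) := by
  rw [aeval_eq_sum_range, Finset.sum_range_succ, hq.coeff_natDegree, one_smul,
    add_eq_zero_iff_neg_eq'] at h0
  rw [← neg_neg (A ^ q.natDegree), h0, neg_mulVec, sum_mulVec]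
  simp only [smul_mulVec]

theorem sum_companionMatrix_smul_pow_mulVec {A : Matrix n n R} {q : R[X]} {t : ℕ} (hq : q.Monic)
    (hdeg : q.natDegree = t) (h0 : aeval A q = 0) (w : n → R) (j : Fin t) :
    ∑ i : Fin t, companionMatrix t q i j • (A ^ (i : ℕ) *ᵥ w) = A ^ ((j : ℕ) + 1) *ᵥ w := by
  subst hdeg
  by_cases hj : (j : ℕ) = q.natDegree - 1
  · rw [show (j : ℕ) + 1 = q.natDegree by omega, pow_natDegree_mulVec hq h0,
      ← Fin.sum_univ_eq_sum_range (fun i => q.coeff i • (A ^ i *ᵥ w)), ← Finset.sum_neg_distrib]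
    simp [companionMatrix, hj]
  · rw [Finset.sum_eq_single ⟨(j : ℕ) + 1, by omega⟩]
    · simp [companionMatrix, hj]
    · intro i _ hi
      simp [companionMatrix, hj, Fin.ext_iff.not.mp hi]
    · simp

theorem krylov_mul_blockDiagonal_companionMatrix [Fintype ι] [DecidableEq ι] {A : Matrix n n R}
    {q : R[X]} {t : ℕ} (hq : q.Monic) (hdeg : q.natDegree = t) (h0 : aeval A q = 0)
    (v : ι → n → R) :
    krylov A t v * blockDiagonal (fun _ : ι => companionMatrix t q) = A * krylov A t v := by
  ext x ⟨j, m⟩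
  have := congrFun (sum_companionMatrix_smul_pow_mulVec hq hdeg h0 (v m) j) x
  rw [pow_succ', ← mulVec_mulVec, Finset.sum_apply] at this
  simpa [krylov, mul_apply, Fintype.sum_prod_type, blockDiagonal_apply, mulVec, dotProduct,
    mul_comm] using this

theorem krylov_map {S : Type*} [CommRing S] (ρ : R →+* S) (A : Matrix n n R) (t : ℕ)
    (v : ι → n → R) : (krylov A t v).map ρ = krylov (A.map ρ) t fun m => ρ ∘ v m := by
  ext x p
  simp [krylov, RingHom.map_mulVec, Matrix.map_pow]

theorem aeval_map_map {S : Type*} [CommRing S] (ρ : R →+* S) (A : Matrix n n R) (q : R[X]) :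
    aeval (A.map ρ) (q.map ρ) = (aeval A q).map ρ :=
  (map_aeval_eq_aeval_map (ψ := ρ.mapMatrix)
    (RingHom.ext fun r => by simp [algebraMap_eq_diagonal, diagonal_map]) q A).symm

theorem isUnit_submatrix_of_span_col_eq_top {m : Type*} [Fintype m] [DecidableEq m]
    (B : Matrix n m R) (σ : n ≃ m) (h : Submodule.span R (Set.range B.col) = ⊤) :
    IsUnit (B.submatrix id σ) := by
  rw [← mulVec_surjective_iff_isUnit, ← coe_mulVecLin, ← LinearMap.range_eq_top, range_mulVecLin]
  convert h using 2
  exact σ.surjective.range_comp B.col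

theorem isUnit_of_isUnit_map {S : Type*} [CommRing S] (ρ : R →+* S) [IsLocalHom ρ]
    {B : Matrix n n R} (h : IsUnit (B.map ρ)) : IsUnit B := by
  rw [isUnit_iff_isUnit_det, ← isUnit_map_iff ρ, RingHom.map_det]
  exact (isUnit_iff_isUnit_det _).mp h

theorem exists_span_col_krylov_eq_top {k : Type*} [Field k] {A : Matrix n n k} {q : k[X]}
    (hqm : q.Monic) (hq : Squarefree q) (h0 : aeval A q = 0) {e : ℕ} (hch : A.charpoly = q ^ e) :
    ∃ v : Fin e → n → k, Submodule.span k (Set.range (krylov A q.natDegree v).col) = ⊤ := by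
  have h0' : aeval (toLin' A) q = 0 := by
    rw [show toLin' A = toLinAlgEquiv' A from rfl, aeval_algEquiv, AlgHom.comp_apply, h0, map_zero]
  obtain ⟨v, hv⟩ := Module.End.exists_cyclicSpan_eq_top hqm hq h0' ((charpoly_toLin' A).trans hch)
  refine ⟨v, eq_top_iff.mpr (hv ▸ (Module.End.cyclicSpan_le_span_pow hqm h0').trans_eq ?_)⟩
  congr! with p
  ext x
  simp [krylov, ← toLin'_pow, toLin'_apply]

theorem exists_conj_eq_blockDiagonal_companionMatrix {k : Type*} [IsLocalRing R] [Field k]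
    {ρ : R →+* k} (hρ : Function.Surjective ρ) {q : R[X]} {t e : ℕ} (hq : q.Monic)
    (hdeg : q.natDegree = t) (hsep : (q.map ρ).Separable)
    {A : Matrix (Fin (t * e)) (Fin (t * e)) R} (hch : A.charpoly = q ^ e) (h0 : aeval A q = 0) :
    ∃ U : GL (Fin (t * e)) R, (U : Matrix (Fin (t * e)) (Fin (t * e)) R) * A * (U⁻¹ : GL _ R) =
      reindex finProdFinEquiv finProdFinEquiv
        (blockDiagonal fun _ : Fin e => companionMatrix t q) := by
  have : IsLocalHom ρ := .of_surjective ρ hρ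
  obtain ⟨w, hw⟩ := exists_span_col_krylov_eq_top (A := A.map ρ) (hq.map ρ) hsep.squarefree
    (by rw [aeval_map_map, h0]; exact Matrix.map_zero _ (map_zero ρ))
    (by rw [charpoly_map, hch, Polynomial.map_pow])
  rw [hq.natDegree_map, hdeg] at hw
  let v : Fin e → Fin (t * e) → R := fun m x => Function.surjInv hρ (w m x)
  have hv : (fun m => ρ ∘ v m) = w := funext fun m => funext fun x => Function.surjInv_eq hρ _
  let P := (krylov A t v).submatrix id finProdFinEquiv.symm
  have hP : IsUnit P := isUnit_of_isUnit_map ρ <| by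
    rw [← submatrix_map, krylov_map, hv]
    exact isUnit_submatrix_of_span_col_eq_top _ _ hw
  have hAP : A * P = P * reindex finProdFinEquiv finProdFinEquiv
      (blockDiagonal fun _ : Fin e => companionMatrix t q) := by
    rw [reindex_apply, submatrix_mul_equiv, krylov_mul_blockDiagonal_companionMatrix hq hdeg h0]
    rfl
  refine ⟨hP.unit⁻¹, ?_⟩
  rw [inv_inv, IsUnit.unit_spec, Matrix.mul_assoc, hAP, ← Matrix.mul_assoc, hP.val_inv_mul,
    Matrix.one_mul]

end Matrix

theorem conj_to_companion_blocks_of_large_l_general (t e : ℕ)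
    (Q : Polynomial ℤ) (hQ : Q.Monic) (hdeg : Q.natDegree = t)
    (hirr : Irreducible (Q.map (Int.castRingHom ℚ))) :
    ∃ N : ℕ, 0 < N ∧ ∀ (l : ℕ) [Fact l.Prime], N < l →
      ∀ A : Matrix (Fin (t * e)) (Fin (t * e)) ℤ_[l],
        A.charpoly = (Q.map (Int.castRingHom ℤ_[l])) ^ e →
        Polynomial.aeval A Q = 0 →
        ∃ U : GL (Fin (t * e)) ℤ_[l],
          (U : Matrix (Fin (t * e)) (Fin (t * e)) ℤ_[l]) * A *
              ((U⁻¹ : GL (Fin (t * e)) ℤ_[l]) : Matrix (Fin (t * e)) (Fin (t * e)) ℤ_[l]) =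
            Matrix.reindex finProdFinEquiv finProdFinEquiv
              (Matrix.blockDiagonal fun _ : Fin e =>
                companionMatrix t (Q.map (Int.castRingHom ℤ_[l]))) := by
  have hQdeg : Q.natDegree ≠ 0 := by
    rw [← hQ.natDegree_map (Int.castRingHom ℚ)]
    exact hirr.natDegree_pos.ne'
  obtain ⟨N, hN, hsep⟩ := exists_separable_map_zmod_of_separable_map_rat hQdeg hirr.separable
  refine ⟨N, hN, fun l _ hl A hch h0 => ?_⟩
  have hmod : (Q.map (Int.castRingHom ℤ_[l])).map PadicInt.toZMod =
      Q.map (Int.castRingHom (ZMod l)) := by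
    rw [Polynomial.map_map, RingHom.ext_int (PadicInt.toZMod.comp _)]
  refine Matrix.exists_conj_eq_blockDiagonal_companionMatrix (ZMod.ringHom_surjective _)
    (hQ.map _) (by rw [hQ.natDegree_map, hdeg]) (hmod ▸ hsep l Fact.out hl) hch ?_
  rwa [← algebraMap_int_eq, aeval_map_algebraMap]

/-- **Standard form of matrices with characteristic polynomial `Q^e`, for large `l`.**
Let `Q ∈ ℤ[x]` be monic of degree `t`, irreducible over `ℚ`, and let `e ≥ 1`, `n = t·e`.
There is a positive `N` such that for every prime `l > N`, every `n × n` matrix `A`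
over `ℤ_l` with characteristic polynomial `Q^e` and `Q(A) = 0` is `GL_n(ℤ_l)`-conjugate
to the block-diagonal matrix made of `e` copies of the companion matrix of `Q`. -/
theorem conj_to_companion_blocks_of_large_l (t e : ℕ) (he : 1 ≤ e)
    (Q : Polynomial ℤ) (hQ : Q.Monic) (hdeg : Q.natDegree = t)
    (hirr : Irreducible (Q.map (Int.castRingHom ℚ))) :
    ∃ N : ℕ, 0 < N ∧ ∀ (l : ℕ) [Fact l.Prime], N < l →
      ∀ A : Matrix (Fin (t * e)) (Fin (t * e)) ℤ_[l],
        A.charpoly = (Q.map (Int.castRingHom ℤ_[l])) ^ e →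
        Polynomial.aeval A Q = 0 →
        ∃ U : GL (Fin (t * e)) ℤ_[l],
          (U : Matrix (Fin (t * e)) (Fin (t * e)) ℤ_[l]) * A *
              ((U⁻¹ : GL (Fin (t * e)) ℤ_[l]) : Matrix (Fin (t * e)) (Fin (t * e)) ℤ_[l]) =
            Matrix.reindex finProdFinEquiv finProdFinEquiv
              (Matrix.blockDiagonal fun _ : Fin e =>
                companionMatrix t (Q.map (Int.castRingHom ℤ_[l]))) :=
  conj_to_companion_blocks_of_large_l_general t e Q hQ hdeg hirr
end

section
/- Let l be a prime, n ≥ 1, and P ∈ ℤ[x] a monic polynomial of degree n. Then the n×n matrices over the l-adic integers ℤ_l whose characteristic polynomial equals the image of P in ℤ_l[x] and whose minimal polynomial over ℚ_l is squarefree fall into only finitely many conjugacy classes under GL_n(ℤ_l); that is, there is a finite set S of such matrices so that every such matrix equals U · C · U⁻¹ for some C ∈ S and U ∈ GL_n(ℤ_l). -/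
/-!
Let `q ∈ ℤ_l[X]` be a nonzero multiple of the squarefree part of `P` over `ℚ_l`: every matrix `A`
in question satisfies `q(A) = 0`, and `q` is separable, so `a q + b q' = c` for some `a, b ∈ ℤ_l[X]` and
`c ≠ 0`. For two matrices `A`, `B` killed by `q`, the noncommutative divided difference
`D = ∑ₖ qₖ ∑_{i<k} Aⁱ B^(k-1-i)` satisfies `A D = D B`, and `D ≡ q'(A)` modulo every ideal
modulo which `A ≡ B`. If `A ≡ B (mod c l)` then `b(A) D = c (1 + l Z)`, so `U = 1 + l Z` lies in
`GL_n(ℤ_l)` and `A U = U B`. As `ℤ_l ⧸ (c l)` is finite, one representative for each residue class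
modulo `c l` that meets the matrices in question is enough.
-/

open Polynomial Finset

theorem Set.exists_finset_subset_forall_exists_eq {α β : Type*} [Finite β] (s : Set α)
    (f : α → β) : ∃ S : Finset α, ↑S ⊆ s ∧ ∀ x ∈ s, ∃ y ∈ S, f y = f x := by
  obtain ⟨t, hts, ht, himage⟩ := (Set.exists_subset_image_finite_and (p := (· = f '' s))).mp
    ⟨f '' s, subset_rfl, Set.toFinite _, rfl⟩
  refine ⟨ht.toFinset, by simpa using hts, fun x hx => ?_⟩
  obtain ⟨y, hy, hyx⟩ : f x ∈ f '' t := himage ▸ Set.mem_image_of_mem f hx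
  exact ⟨y, ht.mem_toFinset.mpr hy, hyx⟩

section GeomSum

variable {M : Type*} [Ring M]

theorem geom_sum₂_succ_eq_mul_add (x y : M) (n : ℕ) :
    ∑ i ∈ range (n + 1), x ^ i * y ^ (n + 1 - 1 - i) =
      x * ∑ i ∈ range n, x ^ i * y ^ (n - 1 - i) + y ^ n := by
  rw [sum_range_succ', mul_sum]
  congr 1
  · refine sum_congr rfl fun i hi => ?_
    rw [← mul_assoc, ← pow_succ']
    congr 2
    have := mem_range.mp hi
    omega
  · simp

theorem mul_geom_sum₂_sub_geom_sum₂_mul (x y : M) (n : ℕ) :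
    x * (∑ i ∈ range n, x ^ i * y ^ (n - 1 - i)) - (∑ i ∈ range n, x ^ i * y ^ (n - 1 - i)) * y =
      x ^ n - y ^ n := by
  induction n with
  | zero => simp
  | succ n ih =>
    set G := ∑ i ∈ range n, x ^ i * y ^ (n - 1 - i)
    rw [geom_sum₂_succ_eq_mul_add]
    calc x * (x * G + y ^ n) - (x * G + y ^ n) * y
        = x * (x * G - G * y) + x * y ^ n - y ^ n * y := by noncomm_ring
      _ = x ^ (n + 1) - y ^ (n + 1) := by rw [ih, pow_succ', pow_succ]; noncomm_ring

end GeomSum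

namespace Polynomial

variable {R M N : Type*} [CommRing R] [Ring M] [Algebra R M] [Ring N] [Algebra R N]

/-- For commuting `x` and `y` this is the value at `(x, y)` of `(q(X) - q(Y)) / (X - Y)`. -/
noncomputable def divDiff (q : R[X]) (x y : M) : M :=
  q.sum fun k r => r • ∑ i ∈ range k, x ^ i * y ^ (k - 1 - i)

theorem mul_divDiff_sub_divDiff_mul (q : R[X]) (x y : M) :
    x * q.divDiff x y - q.divDiff x y * y = aeval x q - aeval y q := by
  simp only [divDiff, aeval_def, eval₂_eq_sum, Polynomial.sum, mul_sum, sum_mul,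
    ← sum_sub_distrib]
  refine sum_congr rfl fun k _ => ?_
  rw [mul_smul_comm, smul_mul_assoc, ← smul_sub, mul_geom_sum₂_sub_geom_sum₂_mul,
    Algebra.smul_def, mul_sub]

theorem divDiff_self (q : R[X]) (x : M) : q.divDiff x x = aeval x (derivative q) := by
  simp only [divDiff, geom_sum₂_self, derivative_apply, Polynomial.sum, map_sum, map_mul,
    aeval_C, aeval_X_pow, map_natCast, Algebra.smul_def, mul_assoc]

theorem map_divDiff (φ : M →ₐ[R] N) (q : R[X]) (x y : M) :
    φ (q.divDiff x y) = q.divDiff (φ x) (φ y) := by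
  simp only [divDiff, Polynomial.sum, map_sum, map_smul, map_mul, map_pow]

theorem exists_mul_add_mul_eq_C_of_isCoprime_map {K : Type*} [IsDomain R] [Field K]
    [Algebra R K] [IsFractionRing R K] {f g : R[X]}
    (h : IsCoprime (f.map (algebraMap R K)) (g.map (algebraMap R K))) :
    ∃ (a b : R[X]) (c : R), c ≠ 0 ∧ a * f + b * g = C c := by
  obtain ⟨a, b, hab⟩ := h
  obtain ⟨d₁, hd₁, ha⟩ := IsLocalization.integerNormalization_spec (nonZeroDivisors R) a
  obtain ⟨d₂, hd₂, hb⟩ := IsLocalization.integerNormalization_spec (nonZeroDivisors R) b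
  refine ⟨C d₂ * IsLocalization.integerNormalization (nonZeroDivisors R) a,
    C d₁ * IsLocalization.integerNormalization (nonZeroDivisors R) b, d₁ * d₂,
    mul_ne_zero (nonZeroDivisors.ne_zero hd₁) (nonZeroDivisors.ne_zero hd₂),
    map_injective _ (IsFractionRing.injective R K) ?_⟩
  simp only [Polynomial.map_add, Polynomial.map_mul, map_C, ha, hb, Algebra.smul_def,
    Polynomial.algebraMap_apply, map_mul]
  linear_combination C (algebraMap R K d₁) * C (algebraMap R K d₂) * hab

end Polynomial

theorem PadicInt.finite_quotient {p : ℕ} [Fact p.Prime] {I : Ideal ℤ_[p]} (hI : I ≠ ⊥) :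
    Finite (ℤ_[p] ⧸ I) := by
  obtain ⟨N, rfl⟩ := ideal_eq_span_pow_p hI
  have : NeZero (p ^ N) := ⟨pow_ne_zero _ (Fact.out : p.Prime).ne_zero⟩
  rw [← ker_toZModPow]
  exact .of_equiv _ (RingHom.quotientKerEquivOfSurjective (ZMod.ringHom_surjective _)).symm.toEquiv

namespace Matrix

open IsLocalRing

variable {n R : Type*} [CommRing R]

theorem exists_eq_add_smul_of_map_mk_eq {m : Type*} {x : R} {A B : Matrix m n R}
    (h : A.map (Ideal.Quotient.mk (Ideal.span {x})) = B.map (Ideal.Quotient.mk (Ideal.span {x}))) :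
    ∃ Y : Matrix m n R, A = B + x • Y := by
  have hmem : ∀ i j, ∃ y, y * x = A i j - B i j := fun i j =>
    Ideal.mem_span_singleton'.mp (Ideal.Quotient.eq.mp (congrFun (congrFun h i) j))
  choose Y hY using hmem
  refine ⟨of Y, ext fun i j => ?_⟩
  simp [hY, mul_comm x]

variable [Fintype n] [DecidableEq n]

theorem commute_aeval (A : Matrix n n R) (p : R[X]) : Commute A (aeval A p) := by
  simpa [Commute, SemiconjBy] using congrArg (aeval A) (X_mul (p := p))

theorem isUnit_one_add_smul_of_mem_maximalIdeal [IsLocalRing R] {π : R}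
    (hπ : π ∈ maximalIdeal R) (Z : Matrix n n R) : IsUnit (1 + π • Z) := by
  have hres : (residue R).mapMatrix (1 + π • Z) = 1 := by
    ext i j
    simp [one_apply, apply_ite, (residue_eq_zero_iff π).mpr hπ]
  rw [isUnit_iff_isUnit_det, ← residue_ne_zero_iff_isUnit, RingHom.map_det, hres, det_one]
  exact one_ne_zero

theorem exists_conj_of_map_mk_eq [IsDomain R] [IsLocalRing R] {q a b : R[X]} {c π : R}
    (hc : c ≠ 0) (hab : a * q + b * derivative q = C c) (hπ : π ∈ maximalIdeal R)
    {A B : Matrix n n R} (hA : aeval A q = 0) (hB : aeval B q = 0)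
    (hAB : A.map (Ideal.Quotient.mk (Ideal.span {c * π})) =
      B.map (Ideal.Quotient.mk (Ideal.span {c * π}))) :
    ∃ U : GL n R, A = (U : Matrix n n R) * B * ((U⁻¹ : GL n R) : Matrix n n R) := by
  set D := q.divDiff A B
  have hD : A * D = D * B :=
    sub_eq_zero.mp (by rw [mul_divDiff_sub_divDiff_mul, hA, hB, sub_self])
  set φ := (Ideal.Quotient.mkₐ R (Ideal.span {c * π})).mapMatrix (m := n)
  have hφ (X : Matrix n n R) : φ X = X.map (Ideal.Quotient.mk (Ideal.span {c * π})) := rfl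
  have hDmod : D.map (Ideal.Quotient.mk (Ideal.span {c * π})) =
      (aeval A (derivative q)).map (Ideal.Quotient.mk (Ideal.span {c * π})) := by
    rw [← hφ, ← hφ, map_divDiff, ← divDiff_self, map_divDiff, hφ A, hφ B, hAB]
  obtain ⟨Y, hY⟩ := exists_eq_add_smul_of_map_mk_eq hDmod
  have hbq : aeval A b * aeval A (derivative q) = c • 1 := by
    simpa [hA, Algebra.algebraMap_eq_smul_one] using congrArg (aeval A) hab
  set U := 1 + π • (aeval A b * Y)
  have hbD : aeval A b * D = c • U := by
    rw [hY, mul_add, hbq, mul_smul_comm, smul_add, smul_smul]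
  have hU : A * U = U * B := by
    refine smul_right_injective (n → n → R) hc ?_
    calc c • (A * U) = A * (aeval A b * D) := by rw [hbD, mul_smul_comm]
      _ = aeval A b * D * B := by
        rw [← mul_assoc, (commute_aeval A b).eq, mul_assoc, hD, mul_assoc]
      _ = c • (U * B) := by rw [hbD, smul_mul_assoc]
  obtain ⟨V, hVU⟩ : IsUnit U := isUnit_one_add_smul_of_mem_maximalIdeal hπ (aeval A b * Y)
  refine ⟨V, ?_⟩
  rw [hVU, ← hU, ← hVU, Units.mul_inv_cancel_right]

theorem aeval_eq_zero_of_aeval_map_eq_zero {S : Type*} [CommRing S] [Algebra R S]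
    (hRS : Function.Injective (algebraMap R S)) {A : Matrix n n R} {q : R[X]}
    (h : aeval (A.map (algebraMap R S)) q = 0) : aeval A q = 0 := by
  have hmap : (algebraMap R S).mapMatrix (aeval A q) =
      aeval (A.map (algebraMap R S)) (q.map (algebraMap R S)) :=
    map_aeval_eq_aeval_map
      (by ext x i j; by_cases hij : i = j <;> simp [algebraMap_matrix_apply, hij]) q A
  rw [aeval_map_algebraMap] at hmap
  exact map_injective hRS (hmap.trans (h.trans (Matrix.map_zero _ (_root_.map_zero _)).symm))

theorem aeval_eq_zero_of_charpoly_dvd_pow {K : Type*} [Field K] {A : Matrix n n K}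
    (hA : Squarefree (minpoly K A)) {q : K[X]} {e : ℕ} (h : A.charpoly ∣ q ^ e) :
    aeval A q = 0 := by
  have hdvd : minpoly K A ∣ q ^ (e + 1) :=
    A.minpoly_dvd_charpoly.trans (h.trans (pow_dvd_pow q e.le_succ))
  exact aeval_eq_zero_of_dvd_aeval_eq_zero ((hA.dvd_pow_iff_dvd e.succ_ne_zero).mp hdvd)
    (minpoly.aeval K A)

theorem exists_separable_forall_aeval_eq_zero {K : Type*} [IsDomain R] [Field K]
    [PerfectField K] [Algebra R K] [IsFractionRing R K] {p : K[X]} (hp : p ≠ 0) :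
    ∃ q : R[X], (q.map (algebraMap R K)).Separable ∧ ∀ A : Matrix n n R,
      (A.map (algebraMap R K)).charpoly = p → Squarefree (minpoly K (A.map (algebraMap R K))) →
      aeval A q = 0 := by
  obtain ⟨q₀, e, hq₀, -, hpq₀⟩ := exists_squarefree_dvd_pow_of_ne_zero hp
  obtain ⟨d, hd, hq⟩ := IsLocalization.integerNormalization_spec (nonZeroDivisors R) q₀
  set q := IsLocalization.integerNormalization (nonZeroDivisors R) q₀
  have hdq₀ : q.map (algebraMap R K) = C (algebraMap R K d) * q₀ := by
    rw [hq, Algebra.smul_def, Polynomial.algebraMap_apply]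
  have hdu : IsUnit (C (algebraMap R K d)) :=
    isUnit_C.mpr (IsFractionRing.to_map_ne_zero_of_mem_nonZeroDivisors hd).isUnit
  refine ⟨q, ?_, fun A hA hAsf => aeval_eq_zero_of_aeval_map_eq_zero
    (IsFractionRing.injective R K) ?_⟩
  · rw [PerfectField.separable_iff_squarefree, hdq₀,
      (associated_unit_mul_left q₀ _ hdu).squarefree_iff]
    exact hq₀
  · rw [← aeval_map_algebraMap K, hdq₀, map_mul]
    exact mul_eq_zero_of_right _ (aeval_eq_zero_of_charpoly_dvd_pow hAsf (hA ▸ hpq₀))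

end Matrix

theorem finitely_many_Zl_conjugacy_classes_general (l : ℕ) [Fact l.Prime] (n : ℕ)
    (P : Polynomial ℤ) (hP : P.Monic) :
    ∃ S : Finset (Matrix (Fin n) (Fin n) ℤ_[l]),
      (∀ C ∈ S, C.charpoly = P.map (Int.castRingHom ℤ_[l]) ∧
        Squarefree (minpoly ℚ_[l] (C.map (fun x : ℤ_[l] => (x : ℚ_[l]))))) ∧
      ∀ A : Matrix (Fin n) (Fin n) ℤ_[l],
        A.charpoly = P.map (Int.castRingHom ℤ_[l]) →
        Squarefree (minpoly ℚ_[l] (A.map (fun x : ℤ_[l] => (x : ℚ_[l])))) →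
        ∃ C ∈ S, ∃ U : GL (Fin n) ℤ_[l],
          A = (U : Matrix (Fin n) (Fin n) ℤ_[l]) * C * ((U⁻¹ : GL (Fin n) ℤ_[l]) :
            Matrix (Fin n) (Fin n) ℤ_[l]) := by
  obtain ⟨q, hsep, hq⟩ := Matrix.exists_separable_forall_aeval_eq_zero (n := Fin n)
    (R := ℤ_[l]) (hP.map (Int.castRingHom ℚ_[l])).ne_zero
  have hqA (A : Matrix (Fin n) (Fin n) ℤ_[l]) (hA : A.charpoly = P.map (Int.castRingHom ℤ_[l]))
      (hAsf : Squarefree (minpoly ℚ_[l] (A.map (fun x : ℤ_[l] => (x : ℚ_[l]))))) :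
      aeval A q = 0 :=
    hq A (by rw [Matrix.charpoly_map, hA, Polynomial.map_map,
      RingHom.ext_int ((algebraMap ℤ_[l] ℚ_[l]).comp _)]) hAsf
  obtain ⟨a, b, c, hc, hab⟩ := exists_mul_add_mul_eq_C_of_isCoprime_map (K := ℚ_[l])
    (g := derivative q) (by simpa only [Polynomial.Separable, derivative_map] using hsep)
  have : Finite (ℤ_[l] ⧸ Ideal.span {c * l}) :=
    PadicInt.finite_quotient (by simp [hc, (Fact.out : l.Prime).ne_zero])
  obtain ⟨S, hSadm, hS⟩ := Set.exists_finset_subset_forall_exists_eq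
    {A : Matrix (Fin n) (Fin n) ℤ_[l] | A.charpoly = P.map (Int.castRingHom ℤ_[l]) ∧
      Squarefree (minpoly ℚ_[l] (A.map (fun x : ℤ_[l] => (x : ℚ_[l]))))}
    (fun A => A.map (Ideal.Quotient.mk (Ideal.span {c * l})))
  refine ⟨S, fun C hC => hSadm hC, fun A hA hAsf => ?_⟩
  obtain ⟨C, hCS, hCA⟩ := hS A ⟨hA, hAsf⟩
  obtain ⟨U, hU⟩ := Matrix.exists_conj_of_map_mk_eq hc hab PadicInt.p_nonunit
    (hqA A hA hAsf) (hqA C (hSadm hCS).1 (hSadm hCS).2) hCA.symm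
  exact ⟨C, hCS, U, hU⟩

/-- **Finitely many `GL_n(ℤ_l)`-conjugacy classes of semisimple matrices with a fixed
characteristic polynomial.** Let `l` be a prime, `n ≥ 1`, and `P ∈ ℤ[x]` monic of degree `n`.
The `n × n` matrices over `ℤ_l` with characteristic polynomial the image of `P` and squarefree
minimal polynomial over `ℚ_l` fall into finitely many `GL_n(ℤ_l)`-conjugacy classes. -/
theorem finitely_many_Zl_conjugacy_classes (l : ℕ) [Fact l.Prime] (n : ℕ) (hn : 1 ≤ n)
    (P : Polynomial ℤ) (hP : P.Monic) (hdeg : P.natDegree = n) :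
    ∃ S : Finset (Matrix (Fin n) (Fin n) ℤ_[l]),
      (∀ C ∈ S, C.charpoly = P.map (Int.castRingHom ℤ_[l]) ∧
        Squarefree (minpoly ℚ_[l] (C.map (fun x : ℤ_[l] => (x : ℚ_[l]))))) ∧
      ∀ A : Matrix (Fin n) (Fin n) ℤ_[l],
        A.charpoly = P.map (Int.castRingHom ℤ_[l]) →
        Squarefree (minpoly ℚ_[l] (A.map (fun x : ℤ_[l] => (x : ℚ_[l])))) →
        ∃ C ∈ S, ∃ U : GL (Fin n) ℤ_[l],
          A = (U : Matrix (Fin n) (Fin n) ℤ_[l]) * C * ((U⁻¹ : GL (Fin n) ℤ_[l]) :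
            Matrix (Fin n) (Fin n) ℤ_[l]) :=
  finitely_many_Zl_conjugacy_classes_general l n P hP
end

section
/- Let l be a prime and let P = P_1 · P_2 · ⋯ · P_s be a monic polynomial in ℤ[x] where the P_i are monic and pairwise coprime in ℚ[x]; set K_i = ∏_{j≠i} P_j, choose g_i ∈ ℚ[x] with ∑_{i=1}^s g_i K_i = 1, and let s₁ ≥ 0 be an integer such that every coefficient of every l^{s₁}·g_i lies in ℤ localized at l. Then for every endomorphism π of a finite free module T over the l-adic integers ℤ_l whose characteristic polynomial is the image of P, one has l^{s₁}·T ⊆ K_1(π)(T) + ⋯ + K_s(π)(T) ⊆ T, and the sum K_1(π)(T) + ⋯ + K_s(π)(T) is a direct sum. -/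
/-!
Clearing denominators in the Bezout identity `∑ gᵢ Kᵢ = 1` gives `∑ Hᵢ Kᵢ = l^{s₁}` with
`Hᵢ ∈ ℤ_l[x]`, so `l^{s₁} x = ∑ Kᵢ(π) Hᵢ(π) x` lies in the sum of the `Kᵢ(π) T`. By Cayley–Hamilton
`P(π) = 0`, hence `Pᵢ(π)` kills `Kᵢ(π) T` and `Kᵢ(π)` kills `Kⱼ(π) T` for `j ≠ i`. An element of
`Kᵢ(π) T ∩ ∑_{j ≠ i} Kⱼ(π) T` is therefore killed by every `Kⱼ(π)` (as `Pᵢ ∣ Kⱼ`), hence by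
`l^{s₁}`, and so vanishes because `T` is torsion-free.
-/

open Polynomial

section Bezout

variable {R M ι : Type*} [CommRing R] [AddCommGroup M] [Module R M] [Fintype ι]
  (f : Module.End R M) {H K : ι → R[X]} {c : R}

theorem smul_eq_sum_aeval_of_sum_mul_eq_C (hHK : ∑ i, H i * K i = C c) (x : M) :
    c • x = ∑ i, aeval f (H i) (aeval f (K i) x) := by
  simpa only [aeval_C, Module.algebraMap_end_apply, map_sum, LinearMap.sum_apply, map_mul,
    Module.End.mul_apply] using (congrArg (fun p => aeval f p x) hHK).symm

theorem smul_mem_iSup_range_aeval_of_sum_mul_eq_C (hHK : ∑ i, H i * K i = C c) (x : M) :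
    c • x ∈ ⨆ i, LinearMap.range (aeval f (K i)) := by
  rw [smul_eq_sum_aeval_of_sum_mul_eq_C f hHK]
  refine Submodule.sum_mem _ fun i _ => Submodule.mem_iSup_of_mem i ?_
  rw [← Module.End.mul_apply, ← map_mul, mul_comm, map_mul]
  exact LinearMap.mem_range_self _ _

theorem smul_eq_zero_of_sum_mul_eq_C (hHK : ∑ i, H i * K i = C c) {x : M}
    (hx : ∀ i, aeval f (K i) x = 0) : c • x = 0 := by
  simp [smul_eq_sum_aeval_of_sum_mul_eq_C f hHK, hx]

end Bezout

section Cofactors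

variable {R M ι : Type*} [CommRing R] [AddCommGroup M] [Module R M] [Fintype ι]
  [DecidableEq ι] (f : Module.End R M) (Q : ι → R[X])

theorem range_aeval_prod_erase_le_ker (hQ : aeval f (∏ i, Q i) = 0) (i : ι) :
    LinearMap.range (aeval f (∏ j ∈ Finset.univ.erase i, Q j)) ≤ LinearMap.ker (aeval f (Q i)) := by
  rintro _ ⟨y, rfl⟩
  rw [LinearMap.mem_ker, ← Module.End.mul_apply, ← map_mul,
    Finset.mul_prod_erase _ _ (Finset.mem_univ i), hQ, LinearMap.zero_apply]

theorem aeval_prod_erase_eq_zero_of_ne {i j : ι} (hij : i ≠ j) {x : M}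
    (hx : aeval f (Q i) x = 0) : aeval f (∏ k ∈ Finset.univ.erase j, Q k) x = 0 := by
  obtain ⟨r, hr⟩ := Finset.dvd_prod_of_mem Q (Finset.mem_erase.2 ⟨hij, Finset.mem_univ i⟩)
  rw [hr, mul_comm, map_mul, Module.End.mul_apply, hx, map_zero]

theorem iSup_range_aeval_prod_erase_le_ker (hQ : aeval f (∏ i, Q i) = 0) (i : ι) :
    ⨆ j, ⨆ (_ : j ≠ i), LinearMap.range (aeval f (∏ k ∈ Finset.univ.erase j, Q k)) ≤
      LinearMap.ker (aeval f (∏ k ∈ Finset.univ.erase i, Q k)) :=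
  iSup₂_le fun j hji _ hx =>
    aeval_prod_erase_eq_zero_of_ne f Q hji (range_aeval_prod_erase_le_ker f Q hQ j hx)

theorem iSupIndep_range_aeval_prod_erase (hQ : aeval f (∏ i, Q i) = 0) {H : ι → R[X]} {c : R}
    (hc : IsSMulRegular M c) (hHQ : ∑ i, H i * ∏ j ∈ Finset.univ.erase i, Q j = C c) :
    iSupIndep fun i => LinearMap.range (aeval f (∏ j ∈ Finset.univ.erase i, Q j)) := by
  refine fun i => Submodule.disjoint_def.2 fun x hxi hx => hc.right_eq_zero_of_smul ?_
  have hQi : aeval f (Q i) x = 0 := range_aeval_prod_erase_le_ker f Q hQ i hxi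
  have hKi := iSup_range_aeval_prod_erase_le_ker f Q hQ i hx
  refine smul_eq_zero_of_sum_mul_eq_C f hHQ fun j => ?_
  obtain rfl | hij := eq_or_ne i j
  · exact hKi
  · exact aeval_prod_erase_eq_zero_of_ne f Q hij hQi

end Cofactors

section Padic

variable {p : ℕ} [Fact p.Prime]

theorem PadicInt.exists_map_eq_of_norm_coeff_le_one (q : ℚ[X])
    (hq : ∀ m, ‖((q.coeff m : ℚ) : ℚ_[p])‖ ≤ 1) :
    ∃ H : ℤ_[p][X], H.map PadicInt.Coe.ringHom = q.map (Rat.castHom ℚ_[p]) :=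
  (lifts_iff_coeff_lifts _).2 fun m => ⟨⟨_, hq m⟩, by rw [coeff_map]; rfl⟩

theorem PadicInt.exists_sum_mul_eq_C_pow {ι : Type*} [Fintype ι] {K : ι → ℤ[X]} {g : ι → ℚ[X]}
    (hg : ∑ i, g i * (K i).map (Int.castRingHom ℚ) = 1) {n : ℕ}
    (hn : ∀ i m, ‖((((p : ℚ) ^ n * (g i).coeff m : ℚ)) : ℚ_[p])‖ ≤ 1) :
    ∃ H : ι → ℤ_[p][X], ∑ i, H i * (K i).map (Int.castRingHom ℤ_[p]) = C ((p : ℤ_[p]) ^ n) := by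
  choose H hH using fun i => exists_map_eq_of_norm_coeff_le_one (p := p) (C ((p : ℚ) ^ n) * g i)
    (by simpa only [coeff_C_mul] using hn i)
  refine ⟨H, map_injective (PadicInt.Coe.ringHom (p := p)) Subtype.val_injective ?_⟩
  have hcast : (PadicInt.Coe.ringHom : ℤ_[p] →+* ℚ_[p]).comp (Int.castRingHom ℤ_[p]) =
      (Rat.castHom ℚ_[p]).comp (Int.castRingHom ℚ) := Subsingleton.elim _ _
  have hterm (i : ι) : (H i * (K i).map (Int.castRingHom ℤ_[p])).map PadicInt.Coe.ringHom =
      (C ((p : ℚ) ^ n) * (g i * (K i).map (Int.castRingHom ℚ))).map (Rat.castHom ℚ_[p]) := by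
    rw [Polynomial.map_mul, hH, map_map, hcast, ← map_map, ← Polynomial.map_mul, mul_assoc]
  rw [Polynomial.map_sum, Finset.sum_congr rfl fun i _ => hterm i, ← Polynomial.map_sum,
    ← Finset.mul_sum, hg, mul_one]
  simp

end Padic

theorem sandwich_estimate_fixed_l_general (l : ℕ) [Fact l.Prime] (s : ℕ)
    (P : Fin s → Polynomial ℤ)
    (K : Fin s → Polynomial ℤ)
    (hK : ∀ i, K i = ∏ j ∈ Finset.univ.erase i, P j)
    (g : Fin s → Polynomial ℚ)
    (hg : ∑ i, g i * (K i).map (Int.castRingHom ℚ) = 1)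
    (s₁ : ℕ)
    (hs₁ : ∀ i m, ‖((((l : ℚ) ^ s₁ * (g i).coeff m : ℚ)) : ℚ_[l])‖ ≤ 1) :
    ∀ (T : Type) [AddCommGroup T] [Module ℤ_[l] T] [Module.Finite ℤ_[l] T]
      [Module.Free ℤ_[l] T] (π : T →ₗ[ℤ_[l]] T),
      π.charpoly = (∏ i, P i).map (Int.castRingHom ℤ_[l]) →
      (∀ x : T, ((l : ℤ_[l]) ^ s₁) • x ∈
        ⨆ i, LinearMap.range (Polynomial.aeval π (K i))) ∧
      iSupIndep (fun i => LinearMap.range (Polynomial.aeval π (K i))) := by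
  intro T _ _ _ _ π hchar
  obtain ⟨H, hH⟩ := PadicInt.exists_sum_mul_eq_C_pow hg hs₁
  have haeval (q : ℤ[X]) : aeval π (q.map (Int.castRingHom ℤ_[l])) = aeval π q := by
    rw [← algebraMap_int_eq, aeval_map_algebraMap]
  set Q := fun i => (P i).map (Int.castRingHom ℤ_[l])
  have hKQ (i : Fin s) : aeval π (K i) = aeval π (∏ j ∈ Finset.univ.erase i, Q j) := by
    rw [← haeval, hK, Polynomial.map_prod]
  have hQ : aeval π (∏ i, Q i) = 0 := by
    rw [← Polynomial.map_prod, ← hchar, LinearMap.aeval_self_charpoly]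
  have hHQ : ∑ i, H i * ∏ j ∈ Finset.univ.erase i, Q j = C ((l : ℤ_[l]) ^ s₁) := by
    simpa only [hK, Polynomial.map_prod] using hH
  have hl : IsSMulRegular T ((l : ℤ_[l]) ^ s₁) :=
    .of_ne_zero (pow_ne_zero _ (Nat.cast_ne_zero.2 (Fact.out : l.Prime).ne_zero))
  simp only [hKQ]
  exact ⟨smul_mem_iSup_range_aeval_of_sum_mul_eq_C π hHQ,
    iSupIndep_range_aeval_prod_erase π Q hQ hl hHQ⟩

/-- **Sandwich estimate for the decomposition at a fixed prime `l`.**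
Let `P = P₁ ⋯ P_s` with the `P i` monic in `ℤ[x]` and pairwise coprime over `ℚ`,
`K i = ∏_{j ≠ i} P j`, and choose Bezout coefficients `g i ∈ ℚ[x]` with `∑ g i * K i = 1`.
If `s₁` is such that all coefficients of all `l^{s₁} • g i` are `l`-integral, then for every
endomorphism `π` of a finite free `ℤ_l`-module `T` with characteristic polynomial the image
of `P`, one has `l^{s₁}·T ⊆ ⊕ K i (π)(T) ⊆ T`, and the sum of the `K i (π)(T)` is direct. -/
theorem sandwich_estimate_fixed_l (l : ℕ) [Fact l.Prime] (s : ℕ)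
    (P : Fin s → Polynomial ℤ) (hmonic : ∀ i, (P i).Monic)
    (hcop : ∀ i j, i ≠ j →
      IsCoprime ((P i).map (Int.castRingHom ℚ)) ((P j).map (Int.castRingHom ℚ)))
    (K : Fin s → Polynomial ℤ)
    (hK : ∀ i, K i = ∏ j ∈ Finset.univ.erase i, P j)
    (g : Fin s → Polynomial ℚ)
    (hg : ∑ i, g i * (K i).map (Int.castRingHom ℚ) = 1)
    (s₁ : ℕ)
    (hs₁ : ∀ i m, ‖((((l : ℚ) ^ s₁ * (g i).coeff m : ℚ)) : ℚ_[l])‖ ≤ 1) :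
    ∀ (T : Type) [AddCommGroup T] [Module ℤ_[l] T] [Module.Finite ℤ_[l] T]
      [Module.Free ℤ_[l] T] (π : T →ₗ[ℤ_[l]] T),
      π.charpoly = (∏ i, P i).map (Int.castRingHom ℤ_[l]) →
      (∀ x : T, ((l : ℤ_[l]) ^ s₁) • x ∈
        ⨆ i, LinearMap.range (Polynomial.aeval π (K i))) ∧
      iSupIndep (fun i => LinearMap.range (Polynomial.aeval π (K i))) :=
  sandwich_estimate_fixed_l_general l s P K hK g hg s₁ hs₁
end

section
/- Let A and B be n×n matrices over ℤ with det A ≠ 0 and det B ≠ 0, and let m₁, m₂ be integers with gcd(m₁, m₂) = 1, gcd(m₁, det A) = 1 and gcd(m₂, det B) = 1. Then gcd(det(m₂·A + m₁·B), m₁·m₂) = 1; in particular, if |m₁·m₂| > 1 then det(m₂·A + m₁·B) ≠ 0. -/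
private lemma dvd_det_sub {n : ℕ} (m : ℤ) (X Y : Matrix (Fin n) (Fin n) ℤ) :
    m ∣ ((X + m • Y).det - X.det) := by
  rw [← Ideal.Quotient.eq_zero_iff_dvd, map_sub, sub_eq_zero]
  let f := Ideal.Quotient.mk (Ideal.span ({m} : Set ℤ))
  show f (X + m • Y).det = f X.det
  rw [RingHom.map_det, RingHom.map_det]
  congr 1
  ext i j
  show f ((X + m • Y) i j) = f (X i j)
  simp only [Matrix.add_apply, Matrix.smul_apply, map_add]
  have : (Ideal.Quotient.mk (Ideal.span ({m} : Set ℤ))) (m • Y i j) = 0 := by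
    rw [Ideal.Quotient.eq_zero_iff_dvd]
    exact Dvd.intro _ rfl
  rw [this, add_zero]

/-- **Determinant of an integral combination of two integer matrices.**
If `A, B` are `n × n` integer matrices with nonzero determinants and `m₁, m₂` are integers
with `gcd(m₁, m₂) = 1`, `gcd(m₁, det A) = 1` and `gcd(m₂, det B) = 1`, then
`gcd(det (m₂·A + m₁·B), m₁·m₂) = 1`; in particular, if `|m₁·m₂| > 1` then
`det (m₂·A + m₁·B) ≠ 0`. -/
theorem det_combination_coprime (n : ℕ) (A B : Matrix (Fin n) (Fin n) ℤ)
    (hA : A.det ≠ 0) (hB : B.det ≠ 0) (m₁ m₂ : ℤ)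
    (h12 : IsCoprime m₁ m₂) (h1A : IsCoprime m₁ A.det) (h2B : IsCoprime m₂ B.det) :
    IsCoprime ((m₂ • A + m₁ • B).det) (m₁ * m₂) ∧
      (1 < |m₁ * m₂| → (m₂ • A + m₁ • B).det ≠ 0) := by
  set S := m₂ • A + m₁ • B with hS
  have d1 : m₁ ∣ (S.det - (m₂ • A).det) := dvd_det_sub m₁ (m₂ • A) B
  have d2 : m₂ ∣ (S.det - (m₁ • B).det) := by
    have := dvd_det_sub m₂ (m₁ • B) A
    rwa [show m₁ • B + m₂ • A = S by rw [hS, add_comm]] at this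
  have c1 : IsCoprime m₁ S.det := by
    obtain ⟨k, hk⟩ := d1
    have hSdet : S.det = (m₂ • A).det + m₁ * k := by linarith
    rw [hSdet, Matrix.det_smul, Fintype.card_fin]
    exact ((h12.pow_right).mul_right h1A).add_mul_left_right k
  have c2 : IsCoprime m₂ S.det := by
    obtain ⟨k, hk⟩ := d2
    have hSdet : S.det = (m₁ • B).det + m₂ * k := by linarith
    rw [hSdet, Matrix.det_smul, Fintype.card_fin]
    exact ((h12.symm.pow_right).mul_right h2B).add_mul_left_right k
  refine ⟨(c1.symm.mul_right c2.symm), fun habs h0 => ?_⟩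
  have : IsUnit (m₁ * m₂) := by
    have := (c1.symm.mul_right c2.symm)
    rw [h0] at this
    exact isCoprime_zero_left.mp this
  rcases Int.isUnit_iff.mp this with h | h <;> rw [h] at habs <;> simp at habs
end

section
/- Let p be a prime and let H be an additive subgroup of the ring M_n(ℤ_p) of n×n matrices over the p-adic integers such that the ℤ_p-submodule of M_n(ℤ_p) generated by H contains a matrix whose determinant is a unit of ℤ_p. Then H itself contains a matrix whose determinant is a unit of ℤ_p. -/
open PadicInt

lemma isUnit_of_toZMod_ne_zero {p : ℕ} [Fact p.Prime] {z : ℤ_[p]}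
    (h : PadicInt.toZMod z ≠ 0) : IsUnit z := by
  by_contra hz
  apply h
  rw [← RingHom.mem_ker, PadicInt.ker_toZMod]
  exact hz

/-- **Density argument for unit-determinant matrices.** Let `p` be a prime and `H` an
additive subgroup of `M_n(ℤ_p)` such that the `ℤ_p`-submodule generated by `H` contains
a matrix with unit determinant. Then `H` itself contains a matrix with unit determinant. -/
theorem exists_unit_det_in_subgroup (p : ℕ) [Fact p.Prime] (n : ℕ)
    (H : AddSubgroup (Matrix (Fin n) (Fin n) ℤ_[p]))
    (h : ∃ x ∈ Submodule.span ℤ_[p] (H : Set (Matrix (Fin n) (Fin n) ℤ_[p])),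
      IsUnit (Matrix.det x)) :
    ∃ x ∈ H, IsUnit (Matrix.det x) := by
  obtain ⟨x, hx, hdet⟩ := h
  -- reduction mod p on matrices
  set f : Matrix (Fin n) (Fin n) ℤ_[p] →+* Matrix (Fin n) (Fin n) (ZMod p) :=
    (PadicInt.toZMod (p := p)).mapMatrix with hf
  have key : ∀ z ∈ Submodule.span ℤ_[p] (H : Set (Matrix (Fin n) (Fin n) ℤ_[p])),
      ∃ y ∈ H, f z = f y := by
    intro z hz
    induction hz using Submodule.span_induction with
    | mem w hw => exact ⟨w, hw, rfl⟩
    | zero => exact ⟨0, H.zero_mem, rfl⟩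
    | add a b _ _ iha ihb =>
      obtain ⟨ya, hya, ha⟩ := iha
      obtain ⟨yb, hyb, hb⟩ := ihb
      exact ⟨ya + yb, H.add_mem hya hyb, by simp [map_add, ha, hb]⟩
    | smul c a _ ih =>
      obtain ⟨y, hy, hxy⟩ := ih
      refine ⟨(PadicInt.toZMod c).val • y, H.nsmul_mem hy _, ?_⟩
      have hc : ((PadicInt.toZMod c).val : ZMod p) = PadicInt.toZMod c :=
        ZMod.natCast_rightInverse _
      ext i j
      simp only [hf, RingHom.mapMatrix_apply, Matrix.map_apply, Matrix.smul_apply,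
        smul_eq_mul, map_mul] at hxy ⊢
      have := congrFun (congrFun hxy i) j
      simp only [Matrix.map_apply] at this
      rw [nsmul_eq_mul, map_mul, map_natCast, hc, ← this]
  obtain ⟨y, hy, hxy⟩ := key x hx
  refine ⟨y, hy, ?_⟩
  apply isUnit_of_toZMod_ne_zero
  have hdx : PadicInt.toZMod x.det = (f x).det := by
    simp [hf, RingHom.map_det]
  have hdy : PadicInt.toZMod y.det = (f y).det := by
    simp [hf, RingHom.map_det]
  rw [hdy, ← hxy, ← hdx]
  exact (hdet.map PadicInt.toZMod).ne_zero
end
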